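/- Let s > d + r with r ≥ 0 an integer, and let N_k(u) = ∑_{k₁+⋯+k_l=k} v_{k₁}⋯v_{k_l} be the k-th Fourier coefficient of a monomial N(u, Du, …, D^r u) of degree l, where each v_{k_j} is a Fourier coefficient of u or of a partial derivative of u of order at most r. If |u_k| ≤ C/|k|^s for k ≠ 0 and |u_0| ≤ C, then the series defining N_k(u) converges absolutely and there is a constant D = D(C,s,l,d,r) with |N_k(u)| ≤ D/|k|^{s-r} for k ≠ 0 and |N_0(u)| ≤ D. -/

import Mathlib

open scoped BigOperators

noncomputable def znorm {d : ℕ} (k : Fin d → ℤ) : ℝ := ‖(fun i => (k i : ℝ) : Fin d → ℝ)‖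

/-- The modified norm on `ℤ^d`: the norm of `k` for `k ≠ 0`, and `|0| := 1`. -/
noncomputable def mnorm {d : ℕ} (k : Fin d → ℤ) : ℝ := if k = 0 then 1 else znorm k

/-!
Write `t = s - r`. Each factor `i^{|β|} k^β u_k` is bounded by `C |k|^{r-s} = C |k|^{-t}`, so
everything reduces to the convolution estimate `∑_{k₁+⋯+k_l=k} ∏ⱼ |kⱼ|^{-t} ≤ K |k|^{-t}`.
Since `|k| ≤ l · maxⱼ |kⱼ|`, the largest `kⱼ₀` contributes at most `l^t |k|^{-t}`; once `j₀` is
fixed, the other `l - 1` indices determine `kⱼ₀` and range freely over `ℤ^d`, which costs at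
most `(∑ₘ |m|^{-t})^{l-1}`, finite for `t > d` by the `p`-series over a lattice. These sums are
taken in `ℝ≥0∞`, where rearranging them needs no summability.
-/

open scoped ENNReal
open Finset

theorem ENNReal.tsum_pi_prod_eq_prod_tsum {ι α : Type*} [Fintype ι] (g : ι → α → ℝ≥0∞) :
    ∑' w : ι → α, ∏ j, g j (w j) = ∏ j, ∑' a, g j a := by
  revert g
  refine Fintype.induction_empty_option
    (P := fun ι _ => ∀ g : ι → α → ℝ≥0∞, ∑' w : ι → α, ∏ j, g j (w j) = ∏ j, ∑' a, g j a)
    ?_ ?_ ?_ ι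
  · intro ι κ _ e ih g
    let _ := Fintype.ofEquiv κ e.symm
    rw [← (e.arrowCongr (Equiv.refl α)).tsum_eq, ← e.prod_comp]
    simpa [Equiv.arrowCongr, ← e.symm.prod_comp] using ih (fun j => g (e j))
  · simp
  · intro ι _ ih g
    rw [← Equiv.piOptionEquivProd.symm.tsum_eq, ENNReal.tsum_prod', Fintype.prod_option]
    simp [ENNReal.tsum_mul_left, ENNReal.tsum_mul_right, ih]

/-- On the fibre `∑ j, v j = k`, the coordinate `v j₀` is determined by the others. -/
theorem tsum_fiber_prod_subtype_ne_le {ι M : Type*} [Fintype ι] [DecidableEq ι] [AddCommGroup M]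
    (g : M → ℝ≥0∞) (k : M) (j₀ : ι) :
    ∑' v : {v : ι → M // ∑ j, v j = k}, ∏ j : {j // j ≠ j₀}, g (v.1 j)
      ≤ (∑' m, g m) ^ (Fintype.card ι - 1) := by
  have hcoord (v : {v : ι → M // ∑ j, v j = k}) :
      v.1 j₀ = k - ∑ j : {j // j ≠ j₀}, v.1 j := by
    rw [eq_sub_iff_add_eq, ← Fintype.sum_eq_add_sum_subtype_ne]
    exact v.2
  have hinj : Function.Injective
      (fun (v : {v : ι → M // ∑ j, v j = k}) (j : {j // j ≠ j₀}) => v.1 j) := by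
    intro v w h
    ext1
    funext j
    by_cases hj : j = j₀
    · subst hj
      rw [hcoord v, hcoord w]
      exact congrArg (fun x : {j' // j' ≠ j} → M => k - ∑ j', x j') h
    · exact congrFun h ⟨j, hj⟩
  calc ∑' v : {v : ι → M // ∑ j, v j = k}, ∏ j : {j // j ≠ j₀}, g (v.1 j)
      ≤ ∑' w : {j // j ≠ j₀} → M, ∏ j, g (w j) :=
        ENNReal.tsum_comp_le_tsum_of_injective hinj (fun w => ∏ j, g (w j))
    _ = (∑' m, g m) ^ (Fintype.card ι - 1) := by
        simp [ENNReal.tsum_pi_prod_eq_prod_tsum]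

theorem summable_and_tsum_le_of_tsum_ofReal_le {α : Type*} {f : α → ℝ} (hf : ∀ a, 0 ≤ f a)
    {B : ℝ} (hB : 0 ≤ B) (h : ∑' a, ENNReal.ofReal (f a) ≤ ENNReal.ofReal B) :
    Summable f ∧ ∑' a, f a ≤ B := by
  have hfin : ∑' a, ENNReal.ofReal (f a) ≠ ∞ := ne_top_of_le_ne_top ENNReal.ofReal_ne_top h
  have hf' : (fun a => (ENNReal.ofReal (f a)).toReal) = f :=
    funext fun a => ENNReal.toReal_ofReal (hf a)
  refine ⟨hf' ▸ ENNReal.summable_toReal hfin, ?_⟩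
  rw [← hf', ← ENNReal.tsum_toReal_eq fun _ => ENNReal.ofReal_ne_top]
  exact ENNReal.toReal_le_of_le_ofReal hB h

section mnorm

variable {d : ℕ}

theorem znorm_eq_norm (k : Fin d → ℤ) : znorm k = ‖k‖ := by
  simp only [znorm, Pi.norm_def]
  congr

theorem norm_le_mnorm (k : Fin d → ℤ) : ‖k‖ ≤ mnorm k := by
  by_cases hk : k = 0
  · simp [mnorm, hk]
  · simp [mnorm, hk, znorm_eq_norm]

theorem one_le_mnorm (k : Fin d → ℤ) : 1 ≤ mnorm k := by
  by_cases hk : k = 0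
  · simp [mnorm, hk]
  obtain ⟨i, hi⟩ := Function.ne_iff.mp hk
  calc (1 : ℝ) ≤ ‖k i‖ := by rw [Int.norm_eq_abs]; exact_mod_cast Int.one_le_abs hi
    _ ≤ ‖k‖ := norm_le_pi_norm k i
    _ ≤ mnorm k := norm_le_mnorm k

theorem mnorm_pos (k : Fin d → ℤ) : 0 < mnorm k :=
  one_pos.trans_le (one_le_mnorm k)

theorem abs_apply_le_mnorm (k : Fin d → ℤ) (i : Fin d) : |(k i : ℝ)| ≤ mnorm k := by
  rw [← Int.norm_eq_abs]
  exact (norm_le_pi_norm k i).trans (norm_le_mnorm k)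

theorem mnorm_sum_le_sum {ι : Type*} [Fintype ι] [Nonempty ι] (v : ι → Fin d → ℤ) :
    mnorm (∑ j, v j) ≤ ∑ j, mnorm (v j) := by
  by_cases h : ∑ j, v j = 0
  · obtain ⟨j⟩ := ‹Nonempty ι›
    calc mnorm (∑ j, v j) = 1 := by simp [mnorm, h]
      _ ≤ mnorm (v j) := one_le_mnorm _
      _ ≤ ∑ j, mnorm (v j) :=
        single_le_sum (fun j _ => (mnorm_pos (v j)).le) (mem_univ j)
  · calc mnorm (∑ j, v j) = ‖∑ j, v j‖ := by simp [mnorm, h, znorm_eq_norm]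
      _ ≤ ∑ j, ‖v j‖ := norm_sum_le _ _
      _ ≤ ∑ j, mnorm (v j) := sum_le_sum fun j _ => norm_le_mnorm (v j)

theorem exists_mnorm_sum_le_card_mul {ι : Type*} [Fintype ι] [Nonempty ι] (v : ι → Fin d → ℤ) :
    ∃ j₀, mnorm (∑ j, v j) ≤ Fintype.card ι * mnorm (v j₀) := by
  obtain ⟨j₀, hj₀⟩ := Finite.exists_max fun j => mnorm (v j)
  refine ⟨j₀, ?_⟩
  calc mnorm (∑ j, v j) ≤ ∑ j, mnorm (v j) := mnorm_sum_le_sum v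
    _ ≤ ∑ _j, mnorm (v j₀) := sum_le_sum fun j _ => hj₀ j
    _ = Fintype.card ι * mnorm (v j₀) := by simp

end mnorm

section convolution

variable {d : ℕ}

open Module in
theorem summable_znorm_rpow_neg {t : ℝ} (ht : (d : ℝ) < t) :
    Summable fun k : Fin d → ℤ => znorm k ^ (-t) := by
  let L := Submodule.span ℤ (Set.range (Pi.basisFun ℝ (Fin d)))
  have hrank : finrank ℤ L = d := by
    rw [ZLattice.rank ℝ L, finrank_fin_fun]
  have hmem (k : Fin d → ℤ) : (fun i => (k i : ℝ)) ∈ L :=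
    ((Pi.basisFun ℝ (Fin d)).mem_span_iff_repr_mem ℤ _).mpr fun i => ⟨k i, rfl⟩
  have hinj : Function.Injective fun k : Fin d → ℤ => (⟨_, hmem k⟩ : L) := fun k k' h => by
    funext i
    simpa using congrFun (congrArg Subtype.val h) i
  exact ((ZLattice.summable_norm_rpow L (-t) (by rw [hrank]; linarith)).comp_injective hinj).congr
    fun _ => rfl

theorem summable_mnorm_rpow_neg {t : ℝ} (ht : (d : ℝ) < t) :
    Summable fun k : Fin d → ℤ => mnorm k ^ (-t) := by
  refine ((summable_znorm_rpow_neg ht).update 0 1).congr fun k => ?_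
  by_cases hk : k = 0 <;> simp [mnorm, hk]

theorem mnorm_rpow_neg_le_of_le_mul {k m : Fin d → ℤ} {n t : ℝ} (hn : 0 < n) (ht : 0 ≤ t)
    (h : mnorm k ≤ n * mnorm m) : mnorm m ^ (-t) ≤ n ^ t * mnorm k ^ (-t) :=
  calc mnorm m ^ (-t) = n ^ t * (n * mnorm m) ^ (-t) := by
        rw [Real.mul_rpow hn.le (mnorm_pos m).le, Real.rpow_neg hn.le, mul_inv_cancel_left₀]
        exact (Real.rpow_pos_of_pos hn t).ne'
    _ ≤ n ^ t * mnorm k ^ (-t) := mul_le_mul_of_nonneg_left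
        (Real.rpow_le_rpow_of_nonpos (mnorm_pos k) h (neg_nonpos.mpr ht)) (by positivity)

variable {ι : Type*} [Fintype ι] [Nonempty ι]

theorem prod_mnorm_rpow_neg_le [DecidableEq ι] {t : ℝ} (ht : 0 ≤ t) (v : ι → Fin d → ℤ) :
    ∏ j, ENNReal.ofReal (mnorm (v j) ^ (-t)) ≤
      ENNReal.ofReal (Fintype.card ι ^ t * mnorm (∑ j, v j) ^ (-t)) *
        ∑ j₀, ∏ j : {j // j ≠ j₀}, ENNReal.ofReal (mnorm (v j.1) ^ (-t)) := by
  obtain ⟨j₀, hj₀⟩ := exists_mnorm_sum_le_card_mul v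
  calc ∏ j, ENNReal.ofReal (mnorm (v j) ^ (-t))
      = ENNReal.ofReal (mnorm (v j₀) ^ (-t)) *
          ∏ j : {j // j ≠ j₀}, ENNReal.ofReal (mnorm (v j.1) ^ (-t)) :=
        Fintype.prod_eq_mul_prod_subtype_ne _ j₀
    _ ≤ ENNReal.ofReal (Fintype.card ι ^ t * mnorm (∑ j, v j) ^ (-t)) *
          ∑ j₀, ∏ j : {j // j ≠ j₀}, ENNReal.ofReal (mnorm (v j.1) ^ (-t)) := by
        gcongr
        · exact mnorm_rpow_neg_le_of_le_mul (by exact_mod_cast Fintype.card_pos) ht hj₀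
        · exact single_le_sum_of_canonicallyOrdered (mem_univ j₀)
            (f := fun j₀ => ∏ j : {j // j ≠ j₀}, ENNReal.ofReal (mnorm (v j.1) ^ (-t)))

theorem tsum_prod_mnorm_rpow_neg_le {t : ℝ} (ht : 0 ≤ t) (k : Fin d → ℤ) :
    ∑' v : {v : ι → Fin d → ℤ // ∑ j, v j = k}, ∏ j, ENNReal.ofReal (mnorm (v.1 j) ^ (-t)) ≤
      ENNReal.ofReal (Fintype.card ι ^ t * mnorm k ^ (-t)) * Fintype.card ι *
        (∑' m : Fin d → ℤ, ENNReal.ofReal (mnorm m ^ (-t))) ^ (Fintype.card ι - 1) := by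
  classical
  calc ∑' v : {v : ι → Fin d → ℤ // ∑ j, v j = k}, ∏ j, ENNReal.ofReal (mnorm (v.1 j) ^ (-t))
      ≤ ∑' v : {v : ι → Fin d → ℤ // ∑ j, v j = k},
          ENNReal.ofReal (Fintype.card ι ^ t * mnorm k ^ (-t)) *
            ∑ j₀, ∏ j : {j // j ≠ j₀}, ENNReal.ofReal (mnorm (v.1 j.1) ^ (-t)) :=
        ENNReal.tsum_le_tsum fun v => by simpa only [v.2] using prod_mnorm_rpow_neg_le ht v.1
    _ = ENNReal.ofReal (Fintype.card ι ^ t * mnorm k ^ (-t)) *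
          ∑ j₀, ∑' v : {v : ι → Fin d → ℤ // ∑ j, v j = k},
            ∏ j : {j // j ≠ j₀}, ENNReal.ofReal (mnorm (v.1 j.1) ^ (-t)) := by
        rw [ENNReal.tsum_mul_left, Summable.tsum_finsetSum fun _ _ => ENNReal.summable]
    _ ≤ ENNReal.ofReal (Fintype.card ι ^ t * mnorm k ^ (-t)) *
          ∑ _j₀ : ι,
            (∑' m : Fin d → ℤ, ENNReal.ofReal (mnorm m ^ (-t))) ^ (Fintype.card ι - 1) := by
        gcongr with j₀
        exact tsum_fiber_prod_subtype_ne_le _ k j₀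
    _ = _ := by rw [sum_const, card_univ, nsmul_eq_mul, mul_assoc]

theorem exists_tsum_prod_mnorm_rpow_neg_le {t : ℝ} (ht : (d : ℝ) < t) :
    ∃ K : ℝ, 0 ≤ K ∧ ∀ k : Fin d → ℤ,
      Summable (fun v : {v : ι → Fin d → ℤ // ∑ j, v j = k} => ∏ j, mnorm (v.1 j) ^ (-t)) ∧
      ∑' v : {v : ι → Fin d → ℤ // ∑ j, v j = k}, ∏ j, mnorm (v.1 j) ^ (-t) ≤
        K * mnorm k ^ (-t) := by
  have ht₀ : 0 ≤ t := (Nat.cast_nonneg d).trans ht.le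
  have hw (m : Fin d → ℤ) : 0 ≤ mnorm m ^ (-t) := (Real.rpow_pos_of_pos (mnorm_pos m) _).le
  set S := ∑' m : Fin d → ℤ, mnorm m ^ (-t)
  have hS₀ : 0 ≤ S := tsum_nonneg hw
  refine ⟨Fintype.card ι ^ t * Fintype.card ι * S ^ (Fintype.card ι - 1), by positivity,
    fun k => ?_⟩
  refine summable_and_tsum_le_of_tsum_ofReal_le (fun v => prod_nonneg fun j _ => hw _)
    (mul_nonneg (by positivity) (hw k)) ?_
  have hS : ∑' m : Fin d → ℤ, ENNReal.ofReal (mnorm m ^ (-t)) = ENNReal.ofReal S :=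
    (ENNReal.ofReal_tsum_of_nonneg hw (summable_mnorm_rpow_neg ht)).symm
  convert tsum_prod_mnorm_rpow_neg_le (ι := ι) ht₀ k using 1
  · simp only [ENNReal.ofReal_prod_of_nonneg fun j _ => hw _]
  · rw [hS, ← ENNReal.ofReal_pow hS₀, ← ENNReal.ofReal_natCast,
      ← ENNReal.ofReal_mul (mul_nonneg (by positivity) (hw k)),
      ← ENNReal.ofReal_mul (mul_nonneg (mul_nonneg (by positivity) (hw k)) (Nat.cast_nonneg _))]
    congr 1
    ring

theorem exists_norm_tsum_prod_le {t C : ℝ} (ht : (d : ℝ) < t) (hC : 0 ≤ C) :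
    ∃ K : ℝ, 0 ≤ K ∧ ∀ f : ι → (Fin d → ℤ) → ℂ, (∀ j m, ‖f j m‖ ≤ C * mnorm m ^ (-t)) →
      ∀ k : Fin d → ℤ,
        Summable (fun v : {v : ι → Fin d → ℤ // ∑ j, v j = k} => ‖∏ j, f j (v.1 j)‖) ∧
        ‖∑' v : {v : ι → Fin d → ℤ // ∑ j, v j = k}, ∏ j, f j (v.1 j)‖ ≤ K * mnorm k ^ (-t) := by
  obtain ⟨K, hK₀, hK⟩ := exists_tsum_prod_mnorm_rpow_neg_le (ι := ι) ht
  refine ⟨C ^ Fintype.card ι * K, by positivity, fun f hf k => ?_⟩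
  obtain ⟨hsum, hle⟩ := hK k
  have hbound (v : {v : ι → Fin d → ℤ // ∑ j, v j = k}) :
      ‖∏ j, f j (v.1 j)‖ ≤ C ^ Fintype.card ι * ∏ j, mnorm (v.1 j) ^ (-t) := by
    rw [norm_prod, ← card_univ, ← prod_const, ← prod_mul_distrib]
    exact prod_le_prod (fun j _ => norm_nonneg _) fun j _ => hf j _
  have hsum' := hsum.mul_left (C ^ Fintype.card ι)
  refine ⟨hsum'.of_nonneg_of_le (fun v => norm_nonneg _) hbound, ?_⟩
  calc ‖∑' v : {v : ι → Fin d → ℤ // ∑ j, v j = k}, ∏ j, f j (v.1 j)‖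
      ≤ ∑' v : {v : ι → Fin d → ℤ // ∑ j, v j = k},
          C ^ Fintype.card ι * ∏ j, mnorm (v.1 j) ^ (-t) :=
        tsum_of_norm_bounded hsum'.hasSum hbound
    _ ≤ C ^ Fintype.card ι * K * mnorm k ^ (-t) := by
        rw [tsum_mul_left, mul_assoc]
        exact mul_le_mul_of_nonneg_left hle (by positivity)

end convolution

/-- `i^{|β|} k^β u_k`, the `k`-th Fourier coefficient of `D^β u` for `u = ∑ₖ u_k e^{ik·x}`. -/
noncomputable def derivCoeff {d : ℕ} (β : Fin d → ℕ) (u : (Fin d → ℤ) → ℂ) (k : Fin d → ℤ) : ℂ :=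
  Complex.I ^ (∑ i, β i) * (∏ i, (k i : ℂ) ^ β i) * u k

theorem norm_derivCoeff_le {d r : ℕ} {C s : ℝ} {u : (Fin d → ℤ) → ℂ}
    (hu : ∀ k, ‖u k‖ ≤ C / mnorm k ^ s) {β : Fin d → ℕ} (hβ : ∑ i, β i ≤ r) (k : Fin d → ℤ) :
    ‖derivCoeff β u k‖ ≤ C * mnorm k ^ (-(s - r)) := by
  have hk := mnorm_pos k
  have hmono : ∏ i, |(k i : ℝ)| ^ β i ≤ mnorm k ^ r :=
    calc ∏ i, |(k i : ℝ)| ^ β i ≤ ∏ i, mnorm k ^ β i :=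
          prod_le_prod (fun i _ => by positivity)
            fun i _ => pow_le_pow_left₀ (abs_nonneg _) (abs_apply_le_mnorm k i) _
      _ = mnorm k ^ ∑ i, β i := prod_pow_eq_pow_sum _ _ _
      _ ≤ mnorm k ^ r := pow_le_pow_right₀ (one_le_mnorm k) hβ
  calc ‖derivCoeff β u k‖ = (∏ i, |(k i : ℝ)| ^ β i) * ‖u k‖ := by
        simp [derivCoeff, norm_prod]
    _ ≤ mnorm k ^ r * (C / mnorm k ^ s) :=
        mul_le_mul hmono (hu k) (norm_nonneg _) (by positivity)
    _ = C * mnorm k ^ (-(s - r)) := by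
        rw [neg_sub, Real.rpow_sub hk, Real.rpow_natCast]
        ring

theorem stmt10_general {d r l : ℕ} (hl : 1 ≤ l) (C s : ℝ) (hC : 0 < C)
    (hs : (d : ℝ) + r < s) (a : ℂ) :
    ∃ D : ℝ, 0 < D ∧ ∀ (u : (Fin d → ℤ) → ℂ),
      (∀ k : Fin d → ℤ, ‖(u k)‖ ≤ C / mnorm k ^ s) →
      ∀ (β : Fin l → Fin d → ℕ), (∀ j, (∑ i, β j i) ≤ r) →
      ∀ k : Fin d → ℤ,
        Summable (fun v : {v : Fin l → (Fin d → ℤ) // ∑ j, v j = k} =>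
          ‖(a * ∏ j, (Complex.I ^ (∑ i, β j i) *
            (∏ i, ((v.1 j i : ℂ)) ^ β j i) * u (v.1 j)))‖) ∧
        ‖(∑' v : {v : Fin l → (Fin d → ℤ) // ∑ j, v j = k},
          a * ∏ j, (Complex.I ^ (∑ i, β j i) *
            (∏ i, ((v.1 j i : ℂ)) ^ β j i) * u (v.1 j)))‖ ≤ D / mnorm k ^ (s - r) := by
  have : Nonempty (Fin l) := ⟨⟨0, hl⟩⟩
  obtain ⟨K, hK₀, hK⟩ :=
    exists_norm_tsum_prod_le (d := d) (ι := Fin l) (t := s - r) (by linarith) hC.le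
  refine ⟨‖a‖ * K + 1, by positivity, fun u hu β hβ k => ?_⟩
  obtain ⟨hsum, hle⟩ := hK (fun j => derivCoeff (β j) u) (fun j => norm_derivCoeff_le hu (hβ j)) k
  refine ⟨(hsum.mul_left ‖a‖).congr fun v => (norm_mul _ _).symm, ?_⟩
  have hw : 0 ≤ mnorm k ^ (-(s - r)) := (Real.rpow_pos_of_pos (mnorm_pos k) _).le
  rw [tsum_mul_left, norm_mul, div_eq_mul_inv, ← Real.rpow_neg (mnorm_pos k).le]
  calc ‖a‖ * ‖∑' v : {v : Fin l → Fin d → ℤ // ∑ j, v j = k}, ∏ j, derivCoeff (β j) u (v.1 j)‖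
      ≤ ‖a‖ * (K * mnorm k ^ (-(s - r))) := mul_le_mul_of_nonneg_left hle (norm_nonneg a)
    _ ≤ (‖a‖ * K + 1) * mnorm k ^ (-(s - r)) := by nlinarith

/-- Decay of Fourier coefficients of a monomial nonlinearity `N(u,Du,…,D^r u)` of degree `l`:
`N_k(u) = a ∑_{k₁+⋯+k_l=k} v_{k₁}⋯v_{k_l}` where the `j`-th factor is the Fourier
coefficient `i^{|β_j|} k_j^{β_j} u_{k_j}` of a derivative `D^{β_j} u` of order `|β_j| ≤ r`.
If `|u_k| ≤ C/|k|^s` (convention `|0| = 1`) with `s > d + r`, the series converges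
absolutely and `|N_k(u)| ≤ D/|k|^{s-r}` for a constant `D = D(C,s,l,d,r,a)`. -/
theorem stmt10 {d r l : ℕ} (hd : 1 ≤ d) (hl : 1 ≤ l) (C s : ℝ) (hC : 0 < C)
    (hs : (d : ℝ) + r < s) (a : ℂ) :
    ∃ D : ℝ, 0 < D ∧ ∀ (u : (Fin d → ℤ) → ℂ),
      (∀ k : Fin d → ℤ, ‖(u k)‖ ≤ C / mnorm k ^ s) →
      ∀ (β : Fin l → Fin d → ℕ), (∀ j, (∑ i, β j i) ≤ r) →
      ∀ k : Fin d → ℤ,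
        Summable (fun v : {v : Fin l → (Fin d → ℤ) // ∑ j, v j = k} =>
          ‖(a * ∏ j, (Complex.I ^ (∑ i, β j i) *
            (∏ i, ((v.1 j i : ℂ)) ^ β j i) * u (v.1 j)))‖) ∧
        ‖(∑' v : {v : Fin l → (Fin d → ℤ) // ∑ j, v j = k},
          a * ∏ j, (Complex.I ^ (∑ i, β j i) *
            (∏ i, ((v.1 j i : ℂ)) ^ β j i) * u (v.1 j)))‖ ≤ D / mnorm k ^ (s - r) :=
  stmt10_general hl C s hC hs a
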